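/- arXiv:1607.00731 — 5 statements merged into one kernel-verified Lean document; each statement's English description precedes it below -/
import Mathlib

section
/- Assume g : ℝ² → ℝ is continuous with g(r,z) ≥ 0 for all (r,z) ∈ [1,3] × [−2,2], and g(r,z) > 0 for every (r,z) ∈ [1,3] × [−2,2] with (r,z) ∉ {(2,−1),(2,1)}. Let r₀ ∈ [1,3], T > 0, and let (θ,z) : [0,T] → ℝ² be a Wilson orbit at radius r₀ with z(t) ∈ [−2,2] for all t ∈ [0,T] and z(T) = z(0). Then z is constant on [0,T] and (r₀, z(0)) ∈ {(2,−1),(2,1)}. Consequently the circles O₁ = {(2,θ,−1)} and O₂ = {(2,θ,1)} are the only periodic orbits of the Wilson flow on 𝕎. (Uniqueness part of Proposition 2.1, item (3).) -/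
open Set

/-- Uniqueness part of Proposition 2.1, item (3): if `g ≥ 0` on `[1,3] × [-2,2]` and
`g > 0` there except at `(2,-1)` and `(2,1)`, then any Wilson orbit
(`θ' = f(r₀, z)`, `z' = g(r₀, z)`) at radius `r₀ ∈ [1,3]` defined on `[0,T]`, `T > 0`,
staying in `z ∈ [-2,2]` and with `z(T) = z(0)` has constant `z`, with
`(r₀, z(0)) ∈ {(2,-1), (2,1)}`; so `O₁ = {(2,θ,-1)}` and `O₂ = {(2,θ,1)}` are the only
periodic orbits of the Wilson flow. -/
theorem wilson_periodic_orbits_unique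
    (f g : ℝ × ℝ → ℝ) (hgc : Continuous g)
    (hg0 : ∀ r z : ℝ, r ∈ Icc (1 : ℝ) 3 → z ∈ Icc (-2 : ℝ) 2 → 0 ≤ g (r, z))
    (hgpos : ∀ r z : ℝ, r ∈ Icc (1 : ℝ) 3 → z ∈ Icc (-2 : ℝ) 2 →
      (r, z) ≠ ((2 : ℝ), (-1 : ℝ)) → (r, z) ≠ ((2 : ℝ), (1 : ℝ)) → 0 < g (r, z))
    (r₀ : ℝ) (hr₀ : r₀ ∈ Icc (1 : ℝ) 3) (T : ℝ) (hT : 0 < T)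
    (θ z : ℝ → ℝ)
    (horbit : ∀ t ∈ Icc (0 : ℝ) T,
      HasDerivAt θ (f (r₀, z t)) t ∧ HasDerivAt z (g (r₀, z t)) t)
    (hzrange : ∀ t ∈ Icc (0 : ℝ) T, z t ∈ Icc (-2 : ℝ) 2)
    (hper : z T = z 0) :
    (∀ t ∈ Icc (0 : ℝ) T, z t = z 0) ∧
    ((r₀, z 0) = ((2 : ℝ), (-1 : ℝ)) ∨ (r₀, z 0) = ((2 : ℝ), (1 : ℝ))) := by
  have hT0 : (0 : ℝ) ∈ Icc (0 : ℝ) T := ⟨le_refl _, hT.le⟩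
  have hTT : T ∈ Icc (0 : ℝ) T := ⟨hT.le, le_refl _⟩
  -- z is monotone on [0,T]
  have hmono : MonotoneOn z (Icc (0 : ℝ) T) := by
    apply monotoneOn_of_deriv_nonneg (convex_Icc _ _)
    · exact fun t ht => ((horbit t ht).2.continuousAt).continuousWithinAt
    · intro t ht
      rw [interior_Icc] at ht
      exact ((horbit t (Ioo_subset_Icc_self ht)).2.differentiableAt).differentiableWithinAt
    · intro t ht
      rw [interior_Icc] at ht
      have ht' := Ioo_subset_Icc_self ht
      rw [(horbit t ht').2.deriv]
      exact hg0 r₀ (z t) hr₀ (hzrange t ht')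
  have hconst : ∀ t ∈ Icc (0 : ℝ) T, z t = z 0 := by
    intro t ht
    have h1 : z 0 ≤ z t := hmono hT0 ht ht.1
    have h2 : z t ≤ z T := hmono ht hTT ht.2
    rw [hper] at h2
    exact le_antisymm h2 h1
  refine ⟨hconst, ?_⟩
  -- derivative at interior point T/2 is 0
  have htm : T / 2 ∈ Icc (0 : ℝ) T := ⟨by linarith, by linarith⟩
  have hnhds : Ioo (0 : ℝ) T ∈ nhds (T / 2) :=
    Ioo_mem_nhds (by linarith) (by linarith)
  have heq : z =ᶠ[nhds (T / 2)] fun _ => z 0 := by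
    filter_upwards [hnhds] with t ht
    exact hconst t (Ioo_subset_Icc_self ht)
  have hd0 : HasDerivAt z 0 (T / 2) :=
    (hasDerivAt_const (T / 2) (z 0)).congr_of_eventuallyEq heq
  have hgz : g (r₀, z (T / 2)) = 0 :=
    (hd0.unique (horbit (T / 2) htm).2).symm
  rw [hconst (T / 2) htm] at hgz
  by_contra h
  push_neg at h
  have := hgpos r₀ (z 0) hr₀ (hzrange 0 hT0) h.1 h.2
  rw [hgz] at this
  exact lt_irrefl 0 this
end

section
/- Assume the function z ↦ g(2,z) is locally Lipschitz, g(2,−1) = 0, and g(2,z) > 0 for all z ∈ [−2,−1). If z : [0,∞) → ℝ satisfies z′(t) = g(2, z(t)) for all t ≥ 0 and z(0) = −2, then −2 ≤ z(t) < −1 for all t ≥ 0, and z(t) → −1 as t → ∞. Hence the forward orbit of every entry point (2,θ,−2) of the Wilson flow is trapped in 𝕎 and limits to the periodic orbit O₁ = {(2,θ,−1)}. (Proposition 2.1, item (4).) -/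
open Set Filter
open scoped Topology

/-!
Below an equilibrium `b` of `z' = F z` with `F > 0` on `[a, b)`, the flow pushes upward at the
level `a`, so solutions cannot leave `[a, b)` downward; they cannot reach `b` in finite time
either, since by Lipschitz uniqueness the only solution through the equilibrium is the constant
one. Hence a solution starting in `[a, b)` increases to a limit `L ≤ b`, and since
`z' = F z → F L` while `z` converges, `F L = 0`, forcing `L = b`.
-/

theorem le_of_hasDerivAt_of_eq_imp_deriv_pos {f f' : ℝ → ℝ} {a t₀ : ℝ}
    (hf : ∀ t, t₀ ≤ t → HasDerivAt f (f' t) t) (h₀ : a ≤ f t₀)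
    (hpos : ∀ t, t₀ ≤ t → f t = a → 0 < f' t) :
    ∀ t, t₀ ≤ t → a ≤ f t := by
  intro t ht
  have key := image_le_of_deriv_right_lt_deriv_boundary (f := -f) (f' := -f') (a := t₀) (b := t)
    (B := fun _ => -a) (B' := 0)
    (fun s hs => (hf s hs.1).neg.continuousAt.continuousWithinAt)
    (fun s hs => (hf s hs.1).neg.hasDerivWithinAt) (by simpa using h₀)
    (fun _ => hasDerivAt_const _ _)
    (fun s hs hfs => by simpa using hpos s hs.1 (neg_inj.mp hfs))
    ⟨ht, le_rfl⟩
  simpa using key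

theorem LocallyLipschitz.eqOn_const_of_hasDerivAt_of_apply_eq_zero {F : ℝ → ℝ}
    (hF : LocallyLipschitz F) {b : ℝ} (hb : F b = 0) {z : ℝ → ℝ} {t₀ t₁ : ℝ}
    (hz : ∀ t ∈ Icc t₀ t₁, HasDerivAt z (F (z t)) t) (h₁ : z t₁ = b) :
    EqOn z (fun _ => b) (Icc t₀ t₁) := by
  have hzc : ContinuousOn z (Icc t₀ t₁) := fun t ht => (hz t ht).continuousAt.continuousWithinAt
  obtain ⟨K, hK⟩ := hF.locallyLipschitzOn.exists_lipschitzOnWith_of_compact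
    ((isCompact_Icc.image_of_continuousOn hzc).insert b)
  exact ODE_solution_unique_of_mem_Icc_left (v := fun _ => F)
    (s := fun _ => insert b (z '' Icc t₀ t₁))
    (fun _ _ => hK) hzc (fun t ht => (hz t (Ioc_subset_Icc_self ht)).hasDerivWithinAt)
    (fun t ht => .inr (mem_image_of_mem z (Ioc_subset_Icc_self ht))) continuousOn_const
    (fun t _ => by simpa [hb] using hasDerivWithinAt_const t (Iic t) b)
    (fun _ _ => mem_insert b _) h₁

theorem eq_zero_of_tendsto_of_tendsto_deriv {f f' : ℝ → ℝ} {L c : ℝ}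
    (hf : ∀ᶠ t in atTop, HasDerivAt f (f' t) t)
    (hL : Tendsto f atTop (𝓝 L)) (hc : Tendsto f' atTop (𝓝 c)) : c = 0 := by
  obtain ⟨T, hT⟩ := eventually_atTop.mp hf
  set τ : ℝ → ℝ := fun t => max t T
  have hτ : Tendsto τ atTop atTop := tendsto_atTop_mono (le_max_left · T) tendsto_id
  have hmvt : ∀ t, ∃ ξ, τ t ≤ ξ ∧ f' ξ = f (τ t + 1) - f (τ t) := by
    intro t
    have hderiv : ∀ x ∈ Icc (τ t) (τ t + 1), HasDerivAt f (f' x) x :=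
      fun x hx => hT x ((le_max_right t T).trans hx.1)
    obtain ⟨ξ, hξ, hslope⟩ := exists_hasDerivAt_eq_slope f f' (lt_add_one (τ t))
      (HasDerivAt.continuousOn hderiv) (fun x hx => hderiv x (Ioo_subset_Icc_self hx))
    exact ⟨ξ, hξ.1.le, by simpa using hslope⟩
  choose ξ hξ hξ_eq using hmvt
  have hξ_top : Tendsto ξ atTop atTop := tendsto_atTop_mono hξ hτ
  have hdiff : Tendsto (f' ∘ ξ) atTop (𝓝 (L - L)) := by
    simpa only [Function.comp_def, hξ_eq] using
      (hL.comp (tendsto_atTop_add_const_right _ 1 hτ)).sub (hL.comp hτ)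
  simpa using tendsto_nhds_unique (hc.comp hξ_top) hdiff

theorem MonotoneOn.exists_tendsto_atTop_of_bddAbove {f : ℝ → ℝ} {t₀ : ℝ}
    (hf : MonotoneOn f (Ici t₀)) (hbdd : BddAbove (f '' Ici t₀)) :
    ∃ L, Tendsto f atTop (𝓝 L) := by
  set g : ℝ → ℝ := fun t => f (max t t₀)
  have hg : Monotone g := fun x y hxy =>
    hf (le_max_right x t₀) (le_max_right y t₀) (max_le_max_right t₀ hxy)
  have hg_bdd : BddAbove (range g) :=
    hbdd.mono (range_subset_iff.mpr fun t => mem_image_of_mem f (le_max_right t t₀))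
  refine ⟨_, (tendsto_atTop_ciSup hg hg_bdd).congr' ?_⟩
  filter_upwards [eventually_ge_atTop t₀] with t ht
  simp [g, max_eq_left ht]

section EquilibriumBelow

variable {F : ℝ → ℝ} {a b : ℝ} {z : ℝ → ℝ}

theorem mem_Ico_of_hasDerivAt_of_pos_below_equilibrium (hF : LocallyLipschitz F) (hb : F b = 0)
    (hpos : ∀ w ∈ Ico a b, 0 < F w) (hz : ∀ t, 0 ≤ t → HasDerivAt z (F (z t)) t)
    (hz₀ : z 0 ∈ Ico a b) :
    ∀ t, 0 ≤ t → z t ∈ Ico a b := by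
  have hab : a < b := hz₀.1.trans_lt hz₀.2
  have hlow : ∀ t, 0 ≤ t → a ≤ z t :=
    le_of_hasDerivAt_of_eq_imp_deriv_pos hz hz₀.1
      fun t _ hzt => hpos _ ⟨hzt.ge, hzt.trans_lt hab⟩
  refine fun t ht => ⟨hlow t ht, lt_of_not_ge fun hbt => hz₀.2.ne ?_⟩
  obtain ⟨s, hs, hzs⟩ : ∃ s ∈ Icc 0 t, z s = b :=
    intermediate_value_Icc ht (fun u hu => (hz u hu.1).continuousAt.continuousWithinAt)
      ⟨hz₀.2.le, hbt⟩
  exact hF.eqOn_const_of_hasDerivAt_of_apply_eq_zero hb (fun u hu => hz u hu.1) hzs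
    ⟨le_rfl, hs.1⟩

theorem tendsto_equilibrium_of_hasDerivAt_of_pos_below (hF : LocallyLipschitz F) (hb : F b = 0)
    (hpos : ∀ w ∈ Ico a b, 0 < F w) (hz : ∀ t, 0 ≤ t → HasDerivAt z (F (z t)) t)
    (hz₀ : z 0 ∈ Ico a b) :
    Tendsto z atTop (𝓝 b) := by
  have hmem := mem_Ico_of_hasDerivAt_of_pos_below_equilibrium hF hb hpos hz hz₀
  have hmono : MonotoneOn z (Ici 0) :=
    monotoneOn_of_hasDerivWithinAt_nonneg (convex_Ici 0)
      (fun t ht => (hz t ht).continuousAt.continuousWithinAt)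
      (fun t ht => (hz t (interior_subset ht)).hasDerivWithinAt)
      (fun t ht => (hpos _ (hmem t (interior_subset ht))).le)
  obtain ⟨L, hL⟩ := hmono.exists_tendsto_atTop_of_bddAbove
    ⟨b, forall_mem_image.mpr fun t ht => (hmem t ht).2.le⟩
  have hLmem : L ∈ Icc a b := isClosed_Icc.mem_of_tendsto hL
    ((eventually_ge_atTop 0).mono fun t ht => Ico_subset_Icc_self (hmem t ht))
  have hFL : F L = 0 :=
    eq_zero_of_tendsto_of_tendsto_deriv ((eventually_ge_atTop 0).mono hz) hL
      (hF.continuous.continuousAt.tendsto.comp hL)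
  obtain rfl : L = b := hLmem.2.eq_of_not_lt fun hLb => (hpos L ⟨hLmem.1, hLb⟩).ne' hFL
  exact hL

end EquilibriumBelow

/-- Proposition 2.1, item (4): if `z ↦ g(2,z)` is locally Lipschitz, `g(2,-1) = 0` and
`g(2,z) > 0` for `z ∈ [-2,-1)`, then any solution of `z' = g(2,z)` on `[0,∞)` with
`z(0) = -2` satisfies `-2 ≤ z(t) < -1` for all `t ≥ 0` and `z(t) → -1` as `t → ∞`:
the forward orbit of every entry point `(2,θ,-2)` is trapped and limits to the periodic
orbit `O₁ = {(2,θ,-1)}`. -/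
theorem wilson_entry_orbit_trapped
    (g : ℝ × ℝ → ℝ)
    (hLip : LocallyLipschitz (fun w : ℝ => g (2, w)))
    (hg0 : g (2, -1) = 0)
    (hgpos : ∀ w ∈ Ico (-2 : ℝ) (-1 : ℝ), 0 < g (2, w))
    (z : ℝ → ℝ)
    (hode : ∀ t : ℝ, 0 ≤ t → HasDerivAt z (g (2, z t)) t)
    (hz0 : z 0 = -2) :
    (∀ t : ℝ, 0 ≤ t → z t ∈ Ico (-2 : ℝ) (-1 : ℝ)) ∧
    Tendsto z atTop (nhds (-1)) := by
  have hz₀ : z 0 ∈ Ico (-2 : ℝ) (-1) := by norm_num [hz0]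
  exact ⟨mem_Ico_of_hasDerivAt_of_pos_below_equilibrium hLip hg0 hgpos hode hz₀,
    tendsto_equilibrium_of_hasDerivAt_of_pos_below hLip hg0 hgpos hode hz₀⟩
end

section
/- Fix r₀ ∈ [1,3] and assume: z ↦ g(r₀,z) is locally Lipschitz, g(r₀,−z) = g(r₀,z) for all z (vertical symmetry of g), and f(r₀,−z) = −f(r₀,z) for all z (anti-symmetry condition (W1) on f). Let (θ,z) : [0,T] → ℝ² be a Wilson orbit at radius r₀ with z(0) = −2 and z(T) = 2. Then z(T−t) = −z(t) for all t ∈ [0,T], and θ(T) = θ(0). Thus the Wilson flow satisfies the entry–exit condition (P2): an orbit that traverses the plug from the bottom face exits directly in front of its entry point. (Proposition 2.1, item (7).) -/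
/-!
Reflecting an orbit through the middle of the plug, `t ↦ -z (T - t)`, gives again a solution of
`z' = g(r₀, z)` because `g(r₀, ·)` is even, and it has the same initial value `-z T = -2`.
Lipschitz uniqueness makes it equal to `z`. Then `θ'(T - t) = f(r₀, -z t) = -θ'(t)` because
`f(r₀, ·)` is odd, so `θ t - θ (T - t)` is constant; it is `θ 0 - θ T` at `t = 0` and its
negative at `t = T`.
-/

open Set

theorem mapsTo_const_sub_Icc_self {α : Type*} [AddCommGroup α] [PartialOrder α]
    [IsOrderedAddMonoid α] (T : α) : MapsTo (T - ·) (Icc 0 T) (Icc 0 T) := fun _ ht =>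
  ⟨sub_nonneg.2 ht.2, sub_le_self T ht.1⟩

variable {E : Type*} [NormedAddCommGroup E] [NormedSpace ℝ E]

theorem ODE_solution_reflect_eq_neg_of_even {v : E → E} (hv : LocallyLipschitz v)
    (hv_even : v.Even) {x : ℝ → E} {T : ℝ}
    (hx : ∀ t ∈ Icc 0 T, HasDerivAt x (v (x t)) t) (hxT : x T = -x 0) :
    ∀ t ∈ Icc 0 T, x (T - t) = -x t := by
  set w : ℝ → E := fun t => -x (T - t) with hw_def
  have hmaps := mapsTo_const_sub_Icc_self T
  have hw : ∀ t ∈ Icc 0 T, HasDerivAt w (v (w t)) t := fun t ht => by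
    have h := ((hx _ (hmaps ht)).comp_const_sub T t).neg
    rwa [neg_neg, ← hv_even] at h
  have hx_cont : ContinuousOn x (Icc 0 T) := fun t ht =>
    (hx t ht).continuousAt.continuousWithinAt
  have hw_cont : ContinuousOn w (Icc 0 T) := fun t ht =>
    (hw t ht).continuousAt.continuousWithinAt
  set K := x '' Icc 0 T ∪ w '' Icc 0 T
  have hK : IsCompact K :=
    (isCompact_Icc.image_of_continuousOn hx_cont).union
      (isCompact_Icc.image_of_continuousOn hw_cont)
  obtain ⟨C, hC⟩ := hv.locallyLipschitzOn.exists_lipschitzOnWith_of_compact hK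
  have hxw : EqOn x w (Icc 0 T) :=
    ODE_solution_unique_of_mem_Icc_right (v := fun _ => v) (s := fun _ => K) (fun _ _ => hC)
      hx_cont (fun t ht => (hx t (Ico_subset_Icc_self ht)).hasDerivWithinAt)
      (fun t ht => Or.inl (mem_image_of_mem x (Ico_subset_Icc_self ht)))
      hw_cont (fun t ht => (hw t (Ico_subset_Icc_self ht)).hasDerivWithinAt)
      (fun t ht => Or.inr (mem_image_of_mem w (Ico_subset_Icc_self ht)))
      (by simp [hw_def, hxT])
  intro t ht
  rw [hxw ht, hw_def, neg_neg]

theorem eq_of_hasDerivAt_of_reflect_neg {θ φ : ℝ → E} {T : ℝ} (hT : 0 ≤ T)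
    (hθ : ∀ t ∈ Icc 0 T, HasDerivAt θ (φ t) t) (hφ : ∀ t ∈ Icc 0 T, φ (T - t) = -φ t) :
    θ T = θ 0 := by
  have hmaps := mapsTo_const_sub_Icc_self T
  have hderiv : ∀ t ∈ Icc 0 T, HasDerivAt (fun s => θ s - θ (T - s)) 0 t := fun t ht => by
    have h := (hθ t ht).sub ((hθ _ (hmaps ht)).comp_const_sub T t)
    rwa [hφ t ht, neg_neg, sub_self] at h
  have hconst := constant_of_has_deriv_right_zero
    (fun t ht => (hderiv t ht).continuousAt.continuousWithinAt)
    (fun t ht => (hderiv t (Ico_subset_Icc_self ht)).hasDerivWithinAt) T (right_mem_Icc.2 hT)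
  simp only [sub_self, sub_zero] at hconst
  have htwice : (2 : ℝ) • (θ T - θ 0) = 0 := by
    rw [two_smul]
    calc θ T - θ 0 + (θ T - θ 0) = (θ T - θ 0) - (θ 0 - θ T) := by abel
      _ = 0 := by rw [hconst, sub_self]
  exact sub_eq_zero.1 ((smul_eq_zero.1 htwice).resolve_left two_ne_zero)

theorem wilson_entry_exit_condition_general
    (f g : ℝ × ℝ → ℝ)
    (r₀ : ℝ)
    (hLip : LocallyLipschitz (fun w : ℝ => g (r₀, w)))
    (hgsym : ∀ w : ℝ, g (r₀, -w) = g (r₀, w))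
    (hfanti : ∀ w : ℝ, f (r₀, -w) = - f (r₀, w))
    (T : ℝ) (hT : 0 ≤ T)
    (θ z : ℝ → ℝ)
    (horbit : ∀ t ∈ Icc (0 : ℝ) T,
      HasDerivAt θ (f (r₀, z t)) t ∧ HasDerivAt z (g (r₀, z t)) t)
    (hz0 : z 0 = -2) (hzT : z T = 2) :
    (∀ t ∈ Icc (0 : ℝ) T, z (T - t) = - z t) ∧ θ T = θ 0 := by
  have hz : ∀ t ∈ Icc (0 : ℝ) T, z (T - t) = - z t :=
    ODE_solution_reflect_eq_neg_of_even hLip hgsym (fun t ht => (horbit t ht).2)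
      (by rw [hz0, hzT, neg_neg])
  exact ⟨hz, eq_of_hasDerivAt_of_reflect_neg hT (fun t ht => (horbit t ht).1)
    fun t ht => by rw [hz t ht, hfanti]⟩

/-- Proposition 2.1, item (7) (entry–exit condition): fix `r₀ ∈ [1,3]`, assume
`z ↦ g(r₀,z)` is locally Lipschitz, `g(r₀,·)` is even and `f(r₀,·)` is odd in `z`.
If a Wilson orbit `(θ,z)` at radius `r₀` on `[0,T]` has `z(0) = -2` and `z(T) = 2`,
then `z(T-t) = -z(t)` for all `t ∈ [0,T]` and `θ(T) = θ(0)`: an orbit traversing the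
plug exits directly in front of its entry point. -/
theorem wilson_entry_exit_condition
    (f g : ℝ × ℝ → ℝ)
    (r₀ : ℝ) (hr₀ : r₀ ∈ Icc (1 : ℝ) 3)
    (hLip : LocallyLipschitz (fun w : ℝ => g (r₀, w)))
    (hgsym : ∀ w : ℝ, g (r₀, -w) = g (r₀, w))
    (hfanti : ∀ w : ℝ, f (r₀, -w) = - f (r₀, w))
    (T : ℝ) (hT : 0 ≤ T)
    (θ z : ℝ → ℝ)
    (horbit : ∀ t ∈ Icc (0 : ℝ) T,
      HasDerivAt θ (f (r₀, z t)) t ∧ HasDerivAt z (g (r₀, z t)) t)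
    (hz0 : z 0 = -2) (hzT : z T = 2) :
    (∀ t ∈ Icc (0 : ℝ) T, z (T - t) = - z t) ∧ θ T = θ 0 :=
  wilson_entry_exit_condition_general f g r₀ hLip hgsym hfanti T hT θ z horbit hz0 hzT
end

section
/- Let n ≥ 2 be an integer, let λ₂ ≥ λ₁ > 0 and ε₀ > 0, and let h : ℝ → ℝ be a function satisfying λ₁·|z+1|ⁿ ≤ h(z) ≤ λ₂·|z+1|ⁿ for all z ∈ [−1−ε₀, −1]. Let z : [0,∞) → ℝ be differentiable with z′(t) = h(z(t)) for all t ≥ 0 and z(0) = −1−δ for some 0 < δ ≤ ε₀. Then z(t) ∈ [−1−δ, −1) for all t ≥ 0, and the distance u(t) = −1 − z(t) to the level z = −1 satisfies, for all t ≥ 0, (δ^{1−n} + (n−1)·λ₂·t)^{−1/(n−1)} ≤ u(t) ≤ (δ^{1−n} + (n−1)·λ₁·t)^{−1/(n−1)}. (This quantifies the speed with which Wilson orbits on the cylinder {r = 2} ascend toward the periodic orbit O₁ when the vertical component g of the Wilson vector field vanishes to order n at (2,−1), as in Hypothesis 4.2; n = 2 is the generic case of Hypothesis 4.1, and the approach becomes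 slower as n increases.) -/
open Set Filter Topology

/-- Quantitative speed of ascent toward the periodic orbit `O₁` under vanishing of
order `n` (Hypothesis 4.2): if `λ₁|z+1|ⁿ ≤ h(z) ≤ λ₂|z+1|ⁿ` on `[-1-ε₀, -1]` and
`z' = h(z)` with `z(0) = -1-δ`, `0 < δ ≤ ε₀`, then `z(t) ∈ [-1-δ, -1)` for all `t ≥ 0`
and the distance `u(t) = -1 - z(t)` satisfies
`(δ^{1-n} + (n-1)λ₂ t)^{-1/(n-1)} ≤ u(t) ≤ (δ^{1-n} + (n-1)λ₁ t)^{-1/(n-1)}`. -/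
theorem ascent_speed_of_order_n_vanishing
    (n : ℕ) (hn : 2 ≤ n)
    (lam₁ lam₂ ε₀ : ℝ) (hlam₁ : 0 < lam₁) (hlam : lam₁ ≤ lam₂) (hε : 0 < ε₀)
    (h : ℝ → ℝ)
    (hbound : ∀ w ∈ Icc (-1 - ε₀) (-1 : ℝ),
      lam₁ * |w + 1| ^ n ≤ h w ∧ h w ≤ lam₂ * |w + 1| ^ n)
    (δ : ℝ) (hδ : 0 < δ) (hδε : δ ≤ ε₀)
    (z : ℝ → ℝ)
    (hode : ∀ t : ℝ, 0 ≤ t → HasDerivAt z (h (z t)) t)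
    (hz0 : z 0 = -1 - δ) :
    (∀ t : ℝ, 0 ≤ t → z t ∈ Ico (-1 - δ) (-1 : ℝ)) ∧
    (∀ t : ℝ, 0 ≤ t →
      (δ ^ ((1 : ℝ) - n) + ((n : ℝ) - 1) * lam₂ * t) ^ (-(1 : ℝ) / ((n : ℝ) - 1))
          ≤ -1 - z t ∧
      -1 - z t ≤
        (δ ^ ((1 : ℝ) - n) + ((n : ℝ) - 1) * lam₁ * t) ^ (-(1 : ℝ) / ((n : ℝ) - 1))) := by
  have hlam₂ : 0 < lam₂ := lt_of_lt_of_le hlam₁ hlam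
  set m : ℝ := (n : ℝ) - 1 with hm_def
  have hm1 : (1 : ℝ) ≤ m := by
    have : (2 : ℝ) ≤ (n : ℝ) := by exact_mod_cast hn
    simp only [hm_def]; linarith
  have hm0 : (0 : ℝ) < m := lt_of_lt_of_le one_pos hm1
  set p : ℝ := (1 : ℝ) - (n : ℝ) with hp_def
  have hpm : p = -m := by simp only [hp_def, hm_def]; ring
  set q : ℝ := -(1 : ℝ) / m with hq_def
  have hq0 : q ≤ 0 := div_nonpos_of_nonpos_of_nonneg (by norm_num) hm0.le
  -- basic facts from membership in Ico
  have hfacts : ∀ t : ℝ, z t ∈ Ico (-1 - δ) (-1 : ℝ) →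
      0 < -1 - z t ∧ lam₁ * (-1 - z t) ^ n ≤ h (z t) ∧ h (z t) ≤ lam₂ * (-1 - z t) ^ n := by
    intro t ht
    obtain ⟨h2, h1⟩ := ht
    have hu : 0 < -1 - z t := by linarith
    have hmem : z t ∈ Icc (-1 - ε₀) (-1 : ℝ) := ⟨by linarith, h1.le⟩
    have habs : |z t + 1| = -1 - z t := by
      rw [abs_of_nonpos (by linarith)]; ring
    obtain ⟨hb1, hb2⟩ := hbound _ hmem
    rw [habs] at hb1 hb2
    exact ⟨hu, hb1, hb2⟩
  -- the auxiliary function F and its derivative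
  set F : ℝ → ℝ := fun s => (-1 - z s) ^ p with hF_def
  set d : ℝ → ℝ := fun s => -(h (z s)) * p * (-1 - z s) ^ (p - 1) with hd_def
  have hFderiv : ∀ t : ℝ, 0 ≤ t → z t ∈ Ico (-1 - δ) (-1 : ℝ) → HasDerivAt F (d t) t := by
    intro t ht hz
    have hu := (hfacts t hz).1
    exact ((hode t ht).const_sub (-1)).rpow_const (Or.inl (ne_of_gt hu))
  have hdb : ∀ t : ℝ, z t ∈ Ico (-1 - δ) (-1 : ℝ) → m * lam₁ ≤ d t ∧ d t ≤ m * lam₂ := by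
    intro t hz
    obtain ⟨hu, hb1, hb2⟩ := hfacts t hz
    have hun : (0 : ℝ) < (-1 - z t) ^ n := pow_pos hu n
    have hrw : (-1 - z t) ^ (p - 1) = ((-1 - z t) ^ n)⁻¹ := by
      rw [show p - 1 = -(n : ℝ) by simp only [hp_def]; ring,
        Real.rpow_neg hu.le, Real.rpow_natCast]
    have hdeq : d t = m * (h (z t) / (-1 - z t) ^ n) := by
      show -(h (z t)) * p * (-1 - z t) ^ (p - 1) = _
      rw [hrw, hpm, div_eq_mul_inv]; ring
    have h1 : lam₁ ≤ h (z t) / (-1 - z t) ^ n := (le_div_iff₀ hun).mpr hb1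
    have h2 : h (z t) / (-1 - z t) ^ n ≤ lam₂ := (div_le_iff₀ hun).mpr hb2
    exact ⟨by rw [hdeq]; exact mul_le_mul_of_nonneg_left h1 hm0.le,
      by rw [hdeq]; exact mul_le_mul_of_nonneg_left h2 hm0.le⟩
  have hF0 : F 0 = δ ^ p := by
    show (-1 - z 0) ^ p = δ ^ p
    rw [hz0]; norm_num
  -- integrated two-sided bound on F on intervals where the solution stays in the strip
  have hFb : ∀ T : ℝ, 0 ≤ T → (∀ s ∈ Icc (0 : ℝ) T, z s ∈ Ico (-1 - δ) (-1 : ℝ)) →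
      δ ^ p + m * lam₁ * T ≤ F T ∧ F T ≤ δ ^ p + m * lam₂ * T := by
    intro T hT hIco
    have hder : ∀ s ∈ Icc (0 : ℝ) T, HasDerivAt F (d s) s :=
      fun s hs => hFderiv s hs.1 (hIco s hs)
    have hcont : ContinuousOn F (Icc 0 T) :=
      fun s hs => (hder s hs).continuousAt.continuousWithinAt
    have hdiff : DifferentiableOn ℝ F (interior (Icc 0 T)) :=
      fun s hs => ((hder s (interior_subset hs)).differentiableAt).differentiableWithinAt
    have h0mem : (0 : ℝ) ∈ Icc (0 : ℝ) T := ⟨le_rfl, hT⟩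
    have hTmem : T ∈ Icc (0 : ℝ) T := ⟨hT, le_rfl⟩
    have hlo := (convex_Icc (0 : ℝ) T).mul_sub_le_image_sub_of_le_deriv hcont hdiff
      (fun x hx => by
        rw [(hder x (interior_subset hx)).deriv]
        exact (hdb x (hIco x (interior_subset hx))).1) 0 h0mem T hTmem hT
    have hhi := (convex_Icc (0 : ℝ) T).image_sub_le_mul_sub_of_deriv_le hcont hdiff
      (fun x hx => by
        rw [(hder x (interior_subset hx)).deriv]
        exact (hdb x (hIco x (interior_subset hx))).2) 0 h0mem T hTmem hT
    rw [hF0] at hlo hhi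
    constructor <;> linarith
  -- recovery of u from F
  have hurec : ∀ t : ℝ, 0 < -1 - z t → F t ^ q = -1 - z t := by
    intro t hu
    show ((-1 - z t) ^ p) ^ q = -1 - z t
    rw [← Real.rpow_mul hu.le, show p * q = 1 by
      rw [hpm, hq_def]; field_simp, Real.rpow_one]
  -- Part 1: invariance of the strip
  have key : ∀ t : ℝ, 0 ≤ t → z t ∈ Ico (-1 - δ) (-1 : ℝ) := by
    by_contra hcon
    push_neg at hcon
    obtain ⟨T, hT0, hTbad⟩ := hcon
    set A : Set ℝ := {t : ℝ | 0 ≤ t ∧ ∀ s ∈ Icc (0 : ℝ) t, z s ∈ Ico (-1 - δ) (-1 : ℝ)}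
      with hA_def
    have hz0mem : z 0 ∈ Ico (-1 - δ) (-1 : ℝ) := by
      rw [hz0]; exact ⟨le_rfl, by linarith⟩
    have h0A : (0 : ℝ) ∈ A := by
      refine ⟨le_rfl, fun s hs => ?_⟩
      have : s = 0 := le_antisymm hs.2 hs.1
      rw [this]; exact hz0mem
    have hAseg : ∀ t ∈ A, ∀ s : ℝ, 0 ≤ s → s ≤ t → s ∈ A :=
      fun t ht s hs0 hst => ⟨hs0, fun r hr => ht.2 r ⟨hr.1, hr.2.trans hst⟩⟩
    have hAbdd : ∀ t ∈ A, t ≤ T := by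
      intro t ht
      by_contra hlt
      push_neg at hlt
      exact hTbad (ht.2 T ⟨hT0, hlt.le⟩)
    have hBdd : BddAbove A := ⟨T, fun t ht => hAbdd t ht⟩
    have hne : A.Nonempty := ⟨0, h0A⟩
    set t₀ : ℝ := sSup A with ht₀_def
    have ht₀0 : 0 ≤ t₀ := le_csSup hBdd h0A
    have hIco_lt : ∀ s : ℝ, 0 ≤ s → s < t₀ → z s ∈ Ico (-1 - δ) (-1 : ℝ) := by
      intro s hs hst
      obtain ⟨t, htA, hst'⟩ := exists_lt_of_lt_csSup hne hst
      exact (hAseg t htA s hs hst'.le).2 s ⟨hs, le_rfl⟩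
    have hz_cont : ContinuousAt z t₀ := (hode t₀ ht₀0).continuousAt
    -- t₀ ∈ A
    have ht₀A : t₀ ∈ A := by
      rcases eq_or_lt_of_le ht₀0 with heq | hpos
    -- case t₀ = 0
      · rw [← heq]; exact h0A
      -- case t₀ > 0: take limits from the left
      · have htends : Tendsto z (𝓝[<] t₀) (𝓝 (z t₀)) :=
          hz_cont.tendsto.mono_left nhdsWithin_le_nhds
        have hIoo : Ioo (0 : ℝ) t₀ ∈ 𝓝[<] t₀ := Ioo_mem_nhdsLT_of_mem ⟨hpos, le_rfl⟩
        -- lower bound passes to the limit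
        have hlow : -1 - δ ≤ z t₀ := by
          refine ge_of_tendsto htends ?_
          filter_upwards [hIoo] with s hs
          exact (hIco_lt s hs.1.le hs.2).1
        -- quantitative upper bound passes to the limit
        set B : ℝ := δ ^ p + m * lam₂ * t₀ with hB_def
        have hδp : (0 : ℝ) < δ ^ p := Real.rpow_pos_of_pos hδ p
        have hB0 : 0 < B := by
          have : 0 ≤ m * lam₂ * t₀ := by positivity
          simp only [hB_def]; linarith
        have hc0 : 0 < B ^ q := Real.rpow_pos_of_pos hB0 q
        have hup : z t₀ ≤ -1 - B ^ q := by
          refine le_of_tendsto htends ?_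
          filter_upwards [hIoo] with s hs
          have hsIco : ∀ r ∈ Icc (0 : ℝ) s, z r ∈ Ico (-1 - δ) (-1 : ℝ) :=
            fun r hr => hIco_lt r hr.1 (lt_of_le_of_lt hr.2 hs.2)
          have hFs := (hFb s hs.1.le hsIco).2
          have hFsB : F s ≤ B := by
            have : m * lam₂ * s ≤ m * lam₂ * t₀ :=
              mul_le_mul_of_nonneg_left hs.2.le (by positivity)
            simp only [hB_def]; linarith
          have hus : 0 < -1 - z s := (hfacts s (hsIco s ⟨hs.1.le, le_rfl⟩)).1
          have hFspos : 0 < F s := Real.rpow_pos_of_pos hus p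
          have := Real.rpow_le_rpow_of_nonpos hFspos hFsB hq0
          rw [hurec s hus] at this
          linarith
        refine ⟨ht₀0, fun s hs => ?_⟩
        rcases lt_or_eq_of_le hs.2 with hlt | heq2
        · exact hIco_lt s hs.1 hlt
        · rw [heq2]; exact ⟨hlow, by linarith⟩
    have hzt₀ : z t₀ ∈ Ico (-1 - δ) (-1 : ℝ) := ht₀A.2 t₀ ⟨ht₀0, le_rfl⟩
    -- the derivative at t₀ is positive, so the solution moves strictly up just after t₀
    have hhpos : 0 < h (z t₀) := by
      obtain ⟨hu, hb1, _⟩ := hfacts t₀ hzt₀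
      exact lt_of_lt_of_le (by positivity) hb1
    have hslope := hasDerivAt_iff_tendsto_slope.mp (hode t₀ ht₀0)
    have hev1 : ∀ᶠ s in 𝓝[>] t₀, 0 < slope z t₀ s := by
      have hne' : ∀ᶠ s in 𝓝[≠] t₀, 0 < slope z t₀ s :=
        hslope.eventually (eventually_gt_nhds hhpos)
      exact hne'.filter_mono (nhdsWithin_mono _ fun x hx => ne_of_gt hx)
    have hev2 : ∀ᶠ s in 𝓝[>] t₀, z s < -1 := by
      have : ∀ᶠ s in 𝓝 t₀, z s < -1 := hz_cont.tendsto.eventually (eventually_lt_nhds hzt₀.2)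
      exact this.filter_mono nhdsWithin_le_nhds
    obtain ⟨b, hb, hsub⟩ := mem_nhdsGT_iff_exists_Ioc_subset.mp (hev1.and hev2)
    have hbA : b ∈ A := by
      refine ⟨ht₀0.trans hb.le, fun s hs => ?_⟩
      rcases le_or_gt s t₀ with hle | hgt
      · exact ht₀A.2 s ⟨hs.1, hle⟩
      · obtain ⟨hsl, hlt⟩ := hsub ⟨hgt, hs.2⟩
        rw [slope_def_field] at hsl
        have hden : 0 < s - t₀ := sub_pos.mpr hgt
        have hnum : 0 < z s - z t₀ := by
          have := mul_pos hsl hden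
          rwa [div_mul_cancel₀ _ (ne_of_gt hden)] at this
        exact ⟨le_of_lt (lt_of_le_of_lt hzt₀.1 (by linarith)), hlt⟩
    exact absurd (le_csSup hBdd hbA) (not_le.mpr hb)
  -- Part 2: the quantitative bounds
  refine ⟨key, fun t ht => ?_⟩
  obtain ⟨hFlo, hFhi⟩ := hFb t ht (fun s hs => key s hs.1)
  have hδp : (0 : ℝ) < δ ^ p := Real.rpow_pos_of_pos hδ p
  have hA1 : (0 : ℝ) < δ ^ p + m * lam₁ * t := by
    have : 0 ≤ m * lam₁ * t := by positivity
    linarith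
  have hA2 : (0 : ℝ) < δ ^ p + m * lam₂ * t := by
    have : 0 ≤ m * lam₂ * t := by positivity
    linarith
  have hu : 0 < -1 - z t := (hfacts t (key t ht)).1
  have hFpos : 0 < F t := Real.rpow_pos_of_pos hu p
  constructor
  · have := Real.rpow_le_rpow_of_nonpos hFpos hFhi hq0
    rwa [hurec t hu] at this
  · have := Real.rpow_le_rpow_of_nonpos hA1 hFlo hq0
    rwa [hurec t hu] at this
end

section
/- Let λ₂ > 0 and ε₀ > 0, let r₀ satisfy 0 < |r₀ − 2| ≤ ε₀, and set a = |r₀ − 2|. Assume g(r₀, z) ≥ 0 for all z, and g(r₀, z) ≤ λ₂·(a² + (z+1)²) for all z with |z+1| ≤ ε₀. If z : [0,T] → ℝ is differentiable with z′(t) = g(r₀, z(t)) for all t ∈ [0,T], z(0) = −1−ε₀ and z(T) = −1+ε₀, then T ≥ (2/(λ₂·a))·arctan(ε₀/a). In particular, under the quadratic upper bound of Hypothesis 4.2 with n = 2, the time a Wilson orbit at radius r₀ needs to climb past the level z = −1 is bounded below by a quantity tending to infinity as r₀ → 2. -/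
/-!
Since `a > 0`, the function `arctan ((z - c) / a)` has derivative `a z' / (a² + (z - c)²)`, so a
quadratic bound `z' ≤ λ₂ (a² + (z - c)²)` caps its growth rate by `λ₂ a`. The orbit is monotone
because `g(r₀, ·) ≥ 0`, hence stays in the band `|z + 1| ≤ ε₀` where the bound holds; across that
band `arctan ((z + 1) / a)` rises from `-arctan (ε₀ / a)` to `arctan (ε₀ / a)`, which takes time at
least `2 arctan (ε₀ / a) / (λ₂ a)`.
-/

open Set Real

theorem monotoneOn_Icc_of_hasDerivAt_nonneg {f f' : ℝ → ℝ} {t₀ t₁ : ℝ}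
    (hf : ∀ t ∈ Icc t₀ t₁, HasDerivAt f (f' t) t) (hf' : ∀ t ∈ Icc t₀ t₁, 0 ≤ f' t) :
    MonotoneOn f (Icc t₀ t₁) :=
  monotoneOn_of_hasDerivWithinAt_nonneg (convex_Icc t₀ t₁)
    (fun t ht => (hf t ht).continuousAt.continuousWithinAt)
    (fun t ht => (hf t (interior_subset ht)).hasDerivWithinAt)
    (fun t ht => hf' t (interior_subset ht))

theorem hasDerivAt_arctan_div {z : ℝ → ℝ} {v a c t : ℝ} (ha : 0 < a) (hz : HasDerivAt z v t) :
    HasDerivAt (fun s => arctan ((z s - c) / a)) (a * v / (a ^ 2 + (z t - c) ^ 2)) t := by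
  convert ((hz.sub_const c).div_const a).arctan using 1
  field_simp

theorem arctan_sub_arctan_le_of_deriv_le_quadratic {z z' : ℝ → ℝ} {lam a c t₀ t₁ : ℝ}
    (ha : 0 < a) (hz : ∀ t ∈ Icc t₀ t₁, HasDerivAt z (z' t) t)
    (hz' : ∀ t ∈ Icc t₀ t₁, z' t ≤ lam * (a ^ 2 + (z t - c) ^ 2)) (ht : t₀ ≤ t₁) :
    arctan ((z t₁ - c) / a) - arctan ((z t₀ - c) / a) ≤ lam * a * (t₁ - t₀) := by
  have hmono : MonotoneOn (fun t => lam * a * t - arctan ((z t - c) / a)) (Icc t₀ t₁) := by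
    refine monotoneOn_Icc_of_hasDerivAt_nonneg
      (fun t ht => ((hasDerivAt_id t).const_mul (lam * a)).sub
        (hasDerivAt_arctan_div ha (hz t ht))) fun t ht => ?_
    have hden : 0 < a ^ 2 + (z t - c) ^ 2 := by positivity
    rw [mul_one, sub_nonneg, div_le_iff₀ hden]
    calc a * z' t ≤ a * (lam * (a ^ 2 + (z t - c) ^ 2)) := by gcongr; exact hz' t ht
      _ = lam * a * (a ^ 2 + (z t - c) ^ 2) := by ring
  have := hmono (left_mem_Icc.2 ht) (right_mem_Icc.2 ht) ht
  simp only at this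
  linarith

theorem climbing_time_lower_bound_general
    (g : ℝ × ℝ → ℝ) (lam₂ ε₀ r₀ a : ℝ)
    (hlam : 0 < lam₂)
    (ha0 : 0 < a)
    (hg0 : ∀ w : ℝ, 0 ≤ g (r₀, w))
    (hgb : ∀ w : ℝ, |w + 1| ≤ ε₀ → g (r₀, w) ≤ lam₂ * (a ^ 2 + (w + 1) ^ 2))
    (T : ℝ) (hT : 0 ≤ T) (z : ℝ → ℝ)
    (hode : ∀ t ∈ Icc (0 : ℝ) T, HasDerivAt z (g (r₀, z t)) t)
    (hz0 : z 0 = -1 - ε₀) (hzT : z T = -1 + ε₀) :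
    (2 / (lam₂ * a)) * arctan (ε₀ / a) ≤ T := by
  have hmono : MonotoneOn z (Icc 0 T) :=
    monotoneOn_Icc_of_hasDerivAt_nonneg hode fun t _ => hg0 (z t)
  have hband : ∀ t ∈ Icc (0 : ℝ) T, |z t + 1| ≤ ε₀ := fun t ht => by
    have h0 := hmono (left_mem_Icc.2 hT) ht ht.1
    have h1 := hmono ht (right_mem_Icc.2 hT) ht.2
    rw [abs_le]
    constructor <;> linarith
  have hclimb := arctan_sub_arctan_le_of_deriv_le_quadratic (c := -1) ha0 hode
    (fun t ht => by simpa only [sub_neg_eq_add] using hgb (z t) (hband t ht)) hT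
  rw [hzT, hz0, show -1 + ε₀ - -1 = ε₀ by ring, show -1 - ε₀ - -1 = -ε₀ by ring, neg_div,
    arctan_neg, sub_neg_eq_add, sub_zero] at hclimb
  rw [div_mul_eq_mul_div, div_le_iff₀ (by positivity)]
  linarith

/-- Lower bound on the climbing time past the level `z = -1` at radius `r₀` near `2`,
under the quadratic upper bound of Hypothesis 4.2 with `n = 2`: if `g(r₀,·) ≥ 0`,
`g(r₀,z) ≤ λ₂(a² + (z+1)²)` for `|z+1| ≤ ε₀`, where `a = |r₀ - 2|` with
`0 < a ≤ ε₀`, and `z' = g(r₀, z)` on `[0,T]` with `z(0) = -1-ε₀` and `z(T) = -1+ε₀`,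
then `T ≥ (2/(λ₂·a))·arctan(ε₀/a)`, a bound tending to infinity as `r₀ → 2`. -/
theorem climbing_time_lower_bound
    (g : ℝ × ℝ → ℝ) (lam₂ ε₀ r₀ a : ℝ)
    (hlam : 0 < lam₂) (hε : 0 < ε₀)
    (ha : a = |r₀ - 2|) (ha0 : 0 < a) (haε : a ≤ ε₀)
    (hg0 : ∀ w : ℝ, 0 ≤ g (r₀, w))
    (hgb : ∀ w : ℝ, |w + 1| ≤ ε₀ → g (r₀, w) ≤ lam₂ * (a ^ 2 + (w + 1) ^ 2))
    (T : ℝ) (hT : 0 ≤ T) (z : ℝ → ℝ)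
    (hode : ∀ t ∈ Icc (0 : ℝ) T, HasDerivAt z (g (r₀, z t)) t)
    (hz0 : z 0 = -1 - ε₀) (hzT : z T = -1 + ε₀) :
    (2 / (lam₂ * a)) * arctan (ε₀ / a) ≤ T :=
  climbing_time_lower_bound_general g lam₂ ε₀ r₀ a hlam ha0 hg0 hgb T hT z hode hz0 hzT
end
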